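/- arXiv:0806.1398 — 16 statements merged into one kernel-verified Lean document; each statement's English description precedes it below -/
import Mathlib

section
/- For each integer n ≥ 1, the ring ℤ[1/n] satisfies the infinite primes property (IPP). -/
/-!
Schur's argument: if `h ∈ ℤ[X]` is nonconstant, `M ≠ 0` and `c = h(a) ≠ 0`, then
`h(a + cMt) = c·w` with `w ≡ 1 (mod M)`, and for all but finitely many `t` we have `w ≠ 0, ±1`;
so some prime not dividing `M` divides a nonzero value of `h`. Applying this with `M` divisible by
any given finite set of primes yields infinitely many such primes.

`ℤ[1/n]` is the localization of `ℤ` away from `n`. Clearing a denominator `n^e` (a unit) turns a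
polynomial over `ℤ[1/n]` into one over `ℤ` of the same degree with proportional values, and the
primes of `ℤ` not dividing `n` stay prime in `ℤ[1/n]`.
-/

open Polynomial

def IPP (D : Type*) [CommRing D] [IsDomain D] : Prop :=
  ∀ g : D[X], 1 ≤ g.natDegree →
    {p : D | Prime p ∧ ∃ k : D, g.eval k ≠ 0 ∧ p ∣ g.eval k}.Infinite

theorem Polynomial.exists_eval_notMem {R : Type*} [CommRing R] [IsDomain R] [Infinite R]
    (p : R[X]) (hp : 0 < p.natDegree) (s : Finset R) : ∃ x, p.eval x ∉ s := by
  have hQ : ∏ c ∈ s, (p - C c) ≠ 0 :=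
    Finset.prod_ne_zero_iff.mpr fun c _ ↦ ne_zero_of_natDegree_gt (n := 0) (by
      rwa [natDegree_sub_C])
  obtain ⟨x, hx⟩ : ∃ x, (∏ c ∈ s, (p - C c)).eval x ≠ 0 := by
    by_contra! h
    exact hQ (Polynomial.funext fun x ↦ by simpa using h x)
  refine ⟨x, fun hxs ↦ hx ?_⟩
  rw [eval_prod]
  exact Finset.prod_eq_zero hxs (by simp)

theorem Polynomial.exists_prime_dvd_eval_not_dvd (h : ℤ[X]) (hh : 0 < h.natDegree) {M : ℤ}
    (hM : M ≠ 0) : ∃ q k : ℤ, Prime q ∧ ¬ q ∣ M ∧ h.eval k ≠ 0 ∧ q ∣ h.eval k := by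
  obtain ⟨a, ha⟩ := h.exists_eval_notMem hh {0}
  set c := h.eval a
  have hc : c ≠ 0 := by simpa using ha
  set H := h.comp (C a + C (c * M) * X)
  have hH : 0 < H.natDegree := by
    rwa [natDegree_comp, natDegree_C_add, natDegree_C_mul_X _ (mul_ne_zero hc hM), mul_one]
  obtain ⟨t, ht⟩ := H.exists_eval_notMem hH {0, c, -c}
  set x := a + c * M * t
  have hHt : H.eval t = h.eval x := by simp [H, x, eval_comp, mul_assoc]
  simp only [hHt, Finset.mem_insert, Finset.mem_singleton, not_or] at ht
  obtain ⟨hx0, hxc, hxnc⟩ := ht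
  obtain ⟨s, hs⟩ : c * M * t ∣ h.eval x - c := by
    simpa [x] using sub_dvd_eval_sub x a h
  set w := 1 + M * (t * s)
  have hxw : h.eval x = c * w := by linear_combination hs
  obtain ⟨q, hq, hqw⟩ : ∃ q, Prime q ∧ q ∣ w := by
    refine Int.exists_prime_and_dvd fun hw ↦ ?_
    rcases Int.natAbs_eq_iff.mp hw with hw | hw
    · exact hxc (by simp [hxw, hw])
    · exact hxnc (by simp [hxw, hw])
  refine ⟨q, x, hq, fun hqM ↦ hq.not_isUnit (isUnit_of_dvd_one ?_), hx0, hxw ▸ hqw.mul_left c⟩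
  simpa [w] using (dvd_sub hqw (hqM.mul_right (t * s)))

theorem Polynomial.infinite_setOf_prime_dvd_eval_not_dvd (h : ℤ[X]) (hh : 0 < h.natDegree)
    {N : ℤ} (hN : N ≠ 0) :
    {q : ℤ | Prime q ∧ ¬ q ∣ N ∧ ∃ k, h.eval k ≠ 0 ∧ q ∣ h.eval k}.Infinite := by
  intro hfin
  obtain ⟨q, k, hq, hqM, hk, hqk⟩ := h.exists_prime_dvd_eval_not_dvd hh
    (M := N * ∏ p ∈ hfin.toFinset, p)
    (mul_ne_zero hN (Finset.prod_ne_zero_iff.mpr fun p hp ↦ (hfin.mem_toFinset.mp hp).1.ne_zero))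
  have hqN : ¬ q ∣ N := fun hd ↦ hqM (hd.mul_right _)
  exact hqM ((Finset.dvd_prod_of_mem id (hfin.mem_toFinset.mpr ⟨hq, hqN, k, hk, hqk⟩)).mul_left N)

theorem IsLocalization.away_adjoin_of_mul_eq_one {R K : Type*} [CommRing R] [CommRing K]
    [Algebra R K] (hinj : Function.Injective (algebraMap R K)) {r : R} {x : K}
    (hx : x * algebraMap R K r = 1) :
    IsLocalization.Away r (Algebra.adjoin R {x}) := by
  have hsurj : ∀ z ∈ Algebra.adjoin R {x},
      ∃ (a : R) (e : ℕ), z * algebraMap R K r ^ e = algebraMap R K a := by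
    intro z hz
    induction hz using Algebra.adjoin_induction with
    | mem y hy => exact ⟨1, 1, by simp_all⟩
    | algebraMap a => exact ⟨a, 0, by simp⟩
    | add y z _ _ hy hz =>
      obtain ⟨a, e, ha⟩ := hy
      obtain ⟨b, f, hb⟩ := hz
      refine ⟨a * r ^ f + b * r ^ e, e + f, ?_⟩
      simp only [map_add, map_mul, map_pow, ← ha, ← hb]
      ring
    | mul y z _ _ hy hz =>
      obtain ⟨a, e, ha⟩ := hy
      obtain ⟨b, f, hb⟩ := hz
      exact ⟨a * b, e + f, by simp only [map_mul, ← ha, ← hb]; ring⟩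
  refine (isLocalization_iff _ _).mpr
    ⟨?_, fun z ↦ ?_, fun h ↦ ⟨1, by simpa using hinj (congrArg Subtype.val h)⟩⟩
  · rintro ⟨_, e, rfl⟩
    rw [map_pow]
    have hxA : algebraMap R _ r * (⟨x, Algebra.subset_adjoin rfl⟩ : Algebra.adjoin R {x}) = 1 :=
      Subtype.ext (by simpa [mul_comm] using hx)
    exact (IsUnit.of_mul_eq_one _ hxA).pow e
  · obtain ⟨a, e, ha⟩ := hsurj z z.2
    exact ⟨(a, ⟨r ^ e, e, rfl⟩), Subtype.ext (by simpa using ha)⟩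

section Localization

variable {R A : Type*} [CommRing R] [CommRing A] [Algebra R A] {S : Submonoid R}
  [IsLocalization S A]

theorem IsLocalization.prime_algebraMap (hS : S ≤ nonZeroDivisors R) {q : R} (hq : Prime q)
    (hqS : ∀ s ∈ S, ¬ q ∣ s) : Prime (algebraMap R A q) := by
  have hq0 : algebraMap R A q ≠ 0 :=
    (map_ne_zero_iff _ (IsLocalization.injective A hS)).mpr hq.ne_zero
  have hdisj : Disjoint (S : Set R) (Ideal.span {q}) :=
    Set.disjoint_left.mpr fun s hs hqs ↦ hqS s hs (Ideal.mem_span_singleton.mp hqs)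
  rw [← Ideal.span_singleton_prime hq0, ← Set.image_singleton, ← Ideal.map_span]
  exact IsLocalization.isPrime_of_isPrime_disjoint S A _
    ((Ideal.span_singleton_prime hq.ne_zero).mpr hq) hdisj

theorem IPP.of_isLocalization [IsDomain A] (hS : S ≤ nonZeroDivisors R)
    (hR : ∀ h : R[X], 1 ≤ h.natDegree →
      {q : R | Prime q ∧ (∀ s ∈ S, ¬ q ∣ s) ∧ ∃ k, h.eval k ≠ 0 ∧ q ∣ h.eval k}.Infinite) :
    IPP A := by
  intro g hg
  have hinj := IsLocalization.injective A hS
  obtain ⟨b, hbS, hb⟩ := IsLocalization.integerNormalization_spec S g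
  set h := IsLocalization.integerNormalization S g
  have hbu : IsUnit (algebraMap R A b) := IsLocalization.map_units A ⟨b, hbS⟩
  have hdeg : h.natDegree = g.natDegree := by
    rw [← natDegree_map_eq_of_injective hinj, hb, natDegree_smul_of_smul_regular]
    exact (isSMulRegular_algebraMap_iff A).mp (hbu.isSMulRegular A)
  have heval (k : R) :
      algebraMap R A (h.eval k) = algebraMap R A b * g.eval (algebraMap R A k) := by
    rw [← Algebra.smul_def, ← eval_smul, ← hb, eval_map, eval₂_at_apply]
  refine ((hR h (hdeg ▸ hg)).image hinj.injOn).mono ?_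
  rintro _ ⟨q, ⟨hq, hqS, k, hk, hqk⟩, rfl⟩
  refine ⟨IsLocalization.prime_algebraMap hS hq hqS, algebraMap R A k, fun h0 ↦ hk (hinj ?_), ?_⟩
  · rw [heval, h0, mul_zero, map_zero]
  · rw [← hbu.dvd_mul_left, ← heval]
    exact map_dvd _ hqk

end Localization

theorem zInvN_satisfies_IPP (n : ℤ) (hn : 1 ≤ n) :
    IPP (Algebra.adjoin ℤ ({(n : ℚ)⁻¹} : Set ℚ)) := by
  have hn0 : n ≠ 0 := by omega
  have := IsLocalization.away_adjoin_of_mul_eq_one (r := n) (x := (n : ℚ)⁻¹) Int.cast_injective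
    (by simp [hn0])
  refine IPP.of_isLocalization (powers_le_nonZeroDivisors_of_noZeroDivisors hn0) fun h hh ↦
    (h.infinite_setOf_prime_dvd_eval_not_dvd hh hn0).mono ?_
  rintro q ⟨hq, hqn, hk⟩
  exact ⟨hq, by rintro _ ⟨e, rfl⟩ hqe; exact hqn (hq.dvd_of_dvd_pow hqe), hk⟩
end

section
/- Let D be a unique factorization domain with fraction field K, let S be a subring of K containing (the image of) D, and suppose there is a nonzero element d ∈ D such that d·s ∈ D for every s ∈ S. Then D satisfies the infinite primes property (IPP) if and only if S satisfies the infinite primes property (IPP). -/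
open Polynomial

/-! The hypotheses force `S = D`. If `x ∈ S` has reduced form `a / b`, then `d * x ^ n ∈ D` for
every `n`, so `b ^ n ∣ d * a ^ n`, hence `b ^ n ∣ d` by coprimality; in a UFD this is only
possible for a unit `b`. So `S ≃+* D`, and IPP is invariant under ring isomorphisms. -/

theorem IPP.of_ringEquiv {A B : Type*} [CommRing A] [IsDomain A] [CommRing B] [IsDomain B]
    (e : A ≃+* B) (h : IPP A) : IPP B := by
  intro g hg
  set g' := g.map (e.symm : B →+* A)
  have hg' : 1 ≤ g'.natDegree := by
    rwa [natDegree_map_eq_of_injective e.symm.injective]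
  have eval_eq (k : A) : g.eval (e k) = e (g'.eval k) := by
    have hmap : g'.map (e : A →+* B) = g := by simp [g', map_map]
    conv_lhs => rw [← hmap]
    rw [eval_map]
    exact eval₂_at_apply (e : A →+* B) k
  refine ((h g' hg').image e.injective.injOn).mono ?_
  rintro _ ⟨p, ⟨hp, k, hk, hpk⟩, rfl⟩
  refine ⟨(MulEquiv.prime_iff e.toMulEquiv).mpr hp, e k, ?_, ?_⟩
  · rwa [eval_eq, map_ne_zero_iff _ e.injective]
  · rw [eval_eq]
    exact map_dvd e hpk

theorem IPP.iff_of_ringEquiv {A B : Type*} [CommRing A] [IsDomain A] [CommRing B] [IsDomain B]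
    (e : A ≃+* B) : IPP A ↔ IPP B :=
  ⟨IPP.of_ringEquiv e, IPP.of_ringEquiv e.symm⟩

theorem isUnit_of_forall_pow_dvd {α : Type*} [CommMonoidWithZero α] [IsCancelMulZero α]
    [WfDvdMonoid α] {b d : α} (hd : d ≠ 0) (h : ∀ n : ℕ, b ^ n ∣ d) : IsUnit b := by
  by_contra hb
  obtain ⟨n, hn⟩ := FiniteMultiplicity.of_not_isUnit hb hd
  exact hn (h (n + 1))

namespace IsFractionRing

variable {A K : Type*} [CommRing A] [IsDomain A] [UniqueFactorizationMonoid A]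
  [Field K] [Algebra A K] [IsFractionRing A K]

theorem isInteger_of_forall_isInteger_mul_pow {d : A} (hd : d ≠ 0) {x : K}
    (h : ∀ n : ℕ, IsLocalization.IsInteger A (algebraMap A K d * x ^ n)) :
    IsLocalization.IsInteger A x := by
  set a := num A x
  set b : A := (den A x : A)
  have hx : x * algebraMap A K b = algebraMap A K a := by
    rw [← mk'_num_den' A x, div_mul_cancel₀ _
      (IsFractionRing.to_map_ne_zero_of_mem_nonZeroDivisors (den A x).2)]
  refine isInteger_of_isUnit_den (isUnit_of_forall_pow_dvd hd fun n => ?_)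
  obtain ⟨c, hc⟩ := h n
  have hcb : c * b ^ n = d * a ^ n := by
    apply IsFractionRing.injective A K
    rw [map_mul, map_mul, hc, map_pow, map_pow, mul_assoc, ← mul_pow, hx]
  exact (num_den_reduced A x).symm.pow.dvd_of_dvd_mul_right ⟨c, by rw [← hcb, mul_comm]⟩

end IsFractionRing

theorem IPP_iff_of_subring_of_fractionField (D : Type*) [CommRing D] [IsDomain D]
    [UniqueFactorizationMonoid D] (S : Subring (FractionRing D))
    (hDS : ∀ a : D, algebraMap D (FractionRing D) a ∈ S)
    (d : D) (hd : d ≠ 0)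
    (hdS : ∀ s ∈ S, ∃ a : D, algebraMap D (FractionRing D) a =
      algebraMap D (FractionRing D) d * s) :
    IPP D ↔ IPP S := by
  let f : D →+* S := (algebraMap D (FractionRing D)).codRestrict S hDS
  have hf_surj : Function.Surjective f := by
    rintro ⟨s, hs⟩
    obtain ⟨a, ha⟩ := IsFractionRing.isInteger_of_forall_isInteger_mul_pow hd fun n =>
      hdS _ (pow_mem hs n)
    exact ⟨a, Subtype.ext ha⟩
  have hf_inj : Function.Injective f := fun a b hab =>
    IsFractionRing.injective D (FractionRing D) (congrArg Subtype.val hab)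
  exact IPP.iff_of_ringEquiv (RingEquiv.ofBijective f ⟨hf_inj, hf_surj⟩)
end

section
/- Let f, g ∈ ℤ[x] be polynomials such that there exists N ∈ ℤ with the property that for every integer k ≥ N, if g(k) ≠ 0 then g(k) ∣ f(k) in ℤ. Then f = 0 or deg f ≥ deg g. -/
open Polynomial

namespace Polynomial

/-- Where `|f(a)| < |g(a)|`, which by `deg f < deg g` fails at only finitely many integers,
divisibility `g(a) ∣ f(a)` forces `f(a) = 0`. -/
theorem eq_zero_of_infinite_eval_dvd_eval_of_degree_lt {f g : ℤ[X]} (hdeg : f.degree < g.degree)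
    (h : {a | g.eval a ≠ 0 → g.eval a ∣ f.eval a}.Infinite) : f = 0 := by
  apply eq_zero_of_infinite_isRoot
  refine (h.sdiff (finite_abs_eval_le_of_degree_lt hdeg)).mono fun a ha ↦ ?_
  obtain ⟨hdvd, hlt⟩ : (g.eval a ≠ 0 → g.eval a ∣ f.eval a) ∧ |f.eval a| < |g.eval a| :=
    ⟨ha.1, not_le.mp ha.2⟩
  have hg : g.eval a ≠ 0 := fun hg ↦ by
    rw [hg, abs_zero] at hlt
    exact (abs_nonneg _).not_gt hlt
  exact Int.eq_zero_of_abs_lt_dvd ((abs_dvd _ _).mpr (hdvd hg)) hlt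

end Polynomial

theorem int_dpp_eventually (f g : ℤ[X])
    (h : ∃ N : ℤ, ∀ k : ℤ, N ≤ k → g.eval k ≠ 0 → g.eval k ∣ f.eval k) :
    f = 0 ∨ g.natDegree ≤ f.natDegree := by
  refine (lt_or_ge f.natDegree g.natDegree).imp (fun hlt ↦ ?_) id
  obtain ⟨N, hN⟩ := h
  exact eq_zero_of_infinite_eval_dvd_eval_of_degree_lt (degree_lt_degree hlt)
    ((Set.Ici_infinite N).mono fun k hk ↦ hN k hk)
end

section
/- Let D be an integral domain and let f, g ∈ (D[x])[y] be polynomials in a variable y with coefficients in D[x]. Suppose that for every natural number N there exists t ≥ N such that the polynomial g(x^t) obtained by substituting y := x^t divides f(x^t) in D[x]. Then f = 0 or deg_y f ≥ deg_y g. -/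
/-!
For `t` larger than the `x`-degrees of all coefficients of `f ∈ D[x][y]`, the substitution
`y := x^t` places the coefficient of `y^i` in the window of exponents `[t i, t i + t)`, so these
pieces do not overlap. Hence `deg f(x^t)` lies in `[t · deg_y f, t · deg_y f + t)`, and a
divisibility `g(x^t) ∣ f(x^t)` with `f(x^t) ≠ 0` forces `t · deg_y g < t · (deg_y f + 1)`.
-/

open Polynomial

namespace Polynomial

variable {R : Type*} [Semiring R]

noncomputable def maxCoeffNatDegree (f : R[X][X]) : ℕ :=
  f.support.sup fun i => (f.coeff i).natDegree

theorem natDegree_coeff_le_maxCoeffNatDegree (f : R[X][X]) (i : ℕ) :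
    (f.coeff i).natDegree ≤ f.maxCoeffNatDegree := by
  by_cases hi : i ∈ f.support
  · exact Finset.le_sup (f := fun i => (f.coeff i).natDegree) hi
  · simp [notMem_support_iff.mp hi]

theorem eval_X_pow_eq_sum (f : R[X][X]) (t : ℕ) :
    f.eval ((X : R[X]) ^ t) = ∑ i ∈ Finset.range (f.natDegree + 1), f.coeff i * X ^ (t * i) := by
  simp only [eval_eq_sum_range, pow_mul]

theorem natDegree_eval_X_pow_le (f : R[X][X]) (t : ℕ) :
    (f.eval ((X : R[X]) ^ t)).natDegree ≤ t * f.natDegree + f.maxCoeffNatDegree := by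
  rw [eval_X_pow_eq_sum]
  refine natDegree_sum_le_of_forall_le _ _ fun i hi => natDegree_mul_le.trans ?_
  have hti : t * i ≤ t * f.natDegree :=
    Nat.mul_le_mul_left t (Nat.lt_succ_iff.mp (Finset.mem_range.mp hi))
  exact (add_le_add (f.natDegree_coeff_le_maxCoeffNatDegree i)
    ((natDegree_X_pow_le _).trans hti)).trans_eq (add_comm _ _)

theorem coeff_eval_X_pow_of_maxCoeffNatDegree_lt (f : R[X][X]) {t : ℕ}
    (ht : f.maxCoeffNatDegree < t) :
    (f.eval ((X : R[X]) ^ t)).coeff (t * f.natDegree + f.leadingCoeff.natDegree) =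
      f.leadingCoeff.leadingCoeff := by
  rw [eval_X_pow_eq_sum, finsetSum_coeff, Finset.sum_eq_single f.natDegree]
  · rw [coeff_mul_X_pow', if_pos (Nat.le_add_right _ _), Nat.add_sub_cancel_left]
    rfl
  · intro i hi hne
    have hlt : t * i + t ≤ t * f.natDegree := by
      rw [← Nat.mul_succ]
      exact Nat.mul_le_mul_left t
        (lt_of_le_of_ne (Nat.lt_succ_iff.mp (Finset.mem_range.mp hi)) hne)
    have := f.natDegree_coeff_le_maxCoeffNatDegree i
    rw [coeff_mul_X_pow']
    split_ifs
    · exact coeff_eq_zero_of_natDegree_lt (by omega)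
    · rfl
  · exact fun hn => absurd (Finset.self_mem_range_succ _) hn

theorem coeff_eval_X_pow_ne_zero {f : R[X][X]} (hf : f ≠ 0) {t : ℕ}
    (ht : f.maxCoeffNatDegree < t) :
    (f.eval ((X : R[X]) ^ t)).coeff (t * f.natDegree + f.leadingCoeff.natDegree) ≠ 0 := by
  rw [f.coeff_eval_X_pow_of_maxCoeffNatDegree_lt ht, leadingCoeff_ne_zero, leadingCoeff_ne_zero]
  exact hf

theorem eval_X_pow_ne_zero {f : R[X][X]} (hf : f ≠ 0) {t : ℕ}
    (ht : f.maxCoeffNatDegree < t) : f.eval ((X : R[X]) ^ t) ≠ 0 :=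
  fun h0 => coeff_eval_X_pow_ne_zero hf ht (by rw [h0, coeff_zero])

theorem mul_natDegree_le_natDegree_eval_X_pow {f : R[X][X]} (hf : f ≠ 0) {t : ℕ}
    (ht : f.maxCoeffNatDegree < t) : t * f.natDegree ≤ (f.eval ((X : R[X]) ^ t)).natDegree :=
  (Nat.le_add_right _ _).trans (le_natDegree_of_ne_zero (coeff_eval_X_pow_ne_zero hf ht))

end Polynomial

theorem polynomial_two_var_degree (D : Type*) [CommRing D] [IsDomain D]
    (f g : Polynomial (Polynomial D))
    (h : ∀ N : ℕ, ∃ t : ℕ, N ≤ t ∧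
      g.eval ((X : D[X]) ^ t) ∣ f.eval ((X : D[X]) ^ t)) :
    f = 0 ∨ g.natDegree ≤ f.natDegree := by
  rcases eq_or_ne f 0 with hf | hf
  · exact Or.inl hf
  rcases eq_or_ne g 0 with hg | hg
  · simp [hg]
  obtain ⟨t, ht, hdvd⟩ := h (f.maxCoeffNatDegree + g.maxCoeffNatDegree + 1)
  have hdeg : t * g.natDegree < t * (f.natDegree + 1) :=
    calc t * g.natDegree
        ≤ (g.eval ((X : D[X]) ^ t)).natDegree :=
          mul_natDegree_le_natDegree_eval_X_pow hg (by omega)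
      _ ≤ (f.eval ((X : D[X]) ^ t)).natDegree :=
          natDegree_le_of_dvd hdvd (eval_X_pow_ne_zero hf (by omega))
      _ ≤ t * f.natDegree + f.maxCoeffNatDegree := f.natDegree_eval_X_pow_le t
      _ < t * (f.natDegree + 1) := by rw [Nat.mul_succ]; omega
  exact Or.inr (Nat.lt_succ_iff.mp (Nat.lt_of_mul_lt_mul_left hdeg))
end

section
/- Let D be an integral domain. Then the polynomial ring D[x] satisfies the degree polynomial property (DPP). -/
open Polynomial

def DPP (D : Type*) [CommRing D] [IsDomain D] : Prop :=
  ∀ f g : D[X], (∀ k : D, g.eval k ≠ 0 → g.eval k ∣ f.eval k) →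
    f = 0 ∨ g.natDegree ≤ f.natDegree

/-!
Substituting `X ^ N` for the outer variable of `p ∈ D[X][X]` (Kronecker substitution) sends
`p` to a polynomial of degree in `[N * deg p, N * (deg p + 1))`, provided `N` exceeds the
degrees of all coefficients of `p`. Choosing such an `N` for both `f` and `g` and specializing
the divisibility hypothesis at `k = X ^ N` gives `N * deg g ≤ deg g(X ^ N) ≤ deg f(X ^ N) <
N * (deg f + 1)`, hence `deg g ≤ deg f`.
-/

namespace Polynomial

variable {R : Type*} [Semiring R] {p : R[X][X]} {N : ℕ}

theorem eventually_natDegree_coeff_lt (p : R[X][X]) :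
    ∀ᶠ N in Filter.atTop, ∀ i, (p.coeff i).natDegree < N := by
  refine Filter.eventually_atTop.2
    ⟨(p.support.sup fun i => (p.coeff i).natDegree) + 1, fun M hM i => ?_⟩
  by_cases hi : i ∈ p.support
  · have := Finset.le_sup (f := fun i => (p.coeff i).natDegree) hi
    omega
  · rw [notMem_support_iff.1 hi, natDegree_zero]
    omega

theorem natDegree_eval_X_pow_lt (hN : ∀ i, (p.coeff i).natDegree < N) {m : ℕ}
    (hm : p.natDegree < m) : (p.eval (X ^ N)).natDegree < N * m := by
  suffices (p.eval (X ^ N)).natDegree ≤ N * m - 1 by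
    have := Nat.mul_le_mul_left N (Nat.one_le_of_lt hm)
    have := hN 0
    omega
  rw [eval_eq_sum_range]
  refine natDegree_sum_le_of_forall_le _ _ fun i hi => ?_
  have hNi : N * (i + 1) ≤ N * m :=
    Nat.mul_le_mul_left N (by rw [Finset.mem_range] at hi; omega)
  calc (p.coeff i * (X ^ N) ^ i).natDegree
      ≤ (p.coeff i).natDegree + N * i := by
        rw [← pow_mul]
        exact natDegree_mul_le_of_le le_rfl (natDegree_X_pow_le _)
    _ ≤ N * m - 1 := by
        have := hN i
        rw [Nat.mul_succ] at hNi
        omega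

theorem eval_X_pow_eq_eraseLead_add (p : R[X][X]) (N : ℕ) :
    p.eval (X ^ N) = p.eraseLead.eval (X ^ N) + p.leadingCoeff * X ^ (N * p.natDegree) := by
  conv_lhs => rw [← eraseLead_add_C_mul_X_pow p]
  rw [eval_add, eval_C_mul, eval_X_pow, pow_mul]

theorem natDegree_coeff_eraseLead_lt (hN : ∀ i, (p.coeff i).natDegree < N) (i : ℕ) :
    (p.eraseLead.coeff i).natDegree < N := by
  rw [eraseLead_coeff]
  split_ifs
  · rw [natDegree_zero]
    exact Nat.zero_lt_of_lt (hN i)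
  · exact hN i

section Nontrivial

variable [Nontrivial R]

theorem degree_eval_X_pow_eraseLead_lt (hN : ∀ i, (p.coeff i).natDegree < N) (hp : p ≠ 0) :
    (p.eraseLead.eval (X ^ N)).degree < (p.leadingCoeff * X ^ (N * p.natDegree)).degree := by
  rcases eraseLead_natDegree_lt_or_eraseLead_eq_zero p with hlt | hzero
  · refine degree_lt_degree
      ((natDegree_eval_X_pow_lt (natDegree_coeff_eraseLead_lt hN) hlt).trans_le ?_)
    rw [natDegree_mul_X_pow _ (leadingCoeff_ne_zero.2 hp)]
    omega
  · rw [hzero, eval_zero, degree_zero, bot_lt_iff_ne_bot, degree_ne_bot]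
    exact fun h => leadingCoeff_ne_zero.2 hp (mul_X_pow_eq_zero h)

theorem leadingCoeff_eval_X_pow (hN : ∀ i, (p.coeff i).natDegree < N) :
    (p.eval (X ^ N)).leadingCoeff = p.leadingCoeff.leadingCoeff := by
  rcases eq_or_ne p 0 with rfl | hp
  · simp
  rw [eval_X_pow_eq_eraseLead_add, leadingCoeff_add_of_degree_lt
    (degree_eval_X_pow_eraseLead_lt hN hp), leadingCoeff_mul_X_pow]

theorem natDegree_eval_X_pow (hN : ∀ i, (p.coeff i).natDegree < N) :
    (p.eval (X ^ N)).natDegree = N * p.natDegree + p.leadingCoeff.natDegree := by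
  rcases eq_or_ne p 0 with rfl | hp
  · simp
  rw [eval_X_pow_eq_eraseLead_add, natDegree_add_eq_right_of_degree_lt
    (degree_eval_X_pow_eraseLead_lt hN hp), natDegree_mul_X_pow _ (leadingCoeff_ne_zero.2 hp),
    add_comm]

theorem eval_X_pow_ne_zero_s5 (hN : ∀ i, (p.coeff i).natDegree < N) (hp : p ≠ 0) :
    p.eval (X ^ N) ≠ 0 := by
  rwa [← leadingCoeff_ne_zero, leadingCoeff_eval_X_pow hN, leadingCoeff_ne_zero,
    leadingCoeff_ne_zero]

end Nontrivial

end Polynomial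

theorem polynomialRing_satisfies_DPP (D : Type*) [CommRing D] [IsDomain D] :
    DPP (Polynomial D) := by
  intro f g hdvd
  by_contra! hfg
  obtain ⟨hf, hlt⟩ := hfg
  have hg : g ≠ 0 := ne_zero_of_natDegree_gt hlt
  obtain ⟨N, hNf, hNg⟩ :=
    ((eventually_natDegree_coeff_lt f).and (eventually_natDegree_coeff_lt g)).exists
  have hfN := eval_X_pow_ne_zero_s5 hNf hf
  have hgN := eval_X_pow_ne_zero_s5 hNg hg
  have : N * g.natDegree < N * g.natDegree :=
    calc N * g.natDegree
        ≤ (g.eval (X ^ N)).natDegree := by rw [natDegree_eval_X_pow hNg]; exact le_self_add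
      _ ≤ (f.eval (X ^ N)).natDegree := natDegree_le_of_dvd (hdvd _ hgN) hfN
      _ < N * (f.natDegree + 1) := natDegree_eval_X_pow_lt hNf (lt_add_one _)
      _ ≤ N * g.natDegree := Nat.mul_le_mul_left N hlt
  exact lt_irrefl _ this
end

section
/- Let D be a unique factorization domain. Then D satisfies the degree polynomial property (DPP) if and only if D satisfies the evaluation polynomial property (EPP). -/
open Polynomial
open scoped nonZeroDivisors

def EPP (D : Type*) [CommRing D] [IsDomain D] : Prop :=
  ∀ f g : D[X], g.IsPrimitive → 1 ≤ g.natDegree →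
    (∀ k : D, g.eval k ≠ 0 → g.eval k ∣ f.eval k) → g ∣ f

/-!
DPP ⇒ EPP: pseudo-divide, `c • f = g * q + r` with `c ≠ 0` and `deg r < deg g`. The remainder
inherits the pointwise divisibility, so DPP forces `r = 0`; thus `g ∣ c • f`, and Gauss's lemma
removes `c` because `g` is primitive.

EPP ⇒ DPP: the primitive part of `g` has the degree of `g` and still divides `f` pointwise, so
by EPP it divides `f`, which bounds the degree of a nonzero `f`.
-/

namespace Polynomial

variable {R : Type*} [CommRing R]

def EvalDvd (g f : R[X]) : Prop :=
  ∀ k : R, g.eval k ≠ 0 → g.eval k ∣ f.eval k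

namespace EvalDvd

variable {f g : R[X]}

theorem mul_left (h : EvalDvd g f) (a : R[X]) : EvalDvd g (a * f) := fun k hk => by
  simpa only [eval_mul] using (h k hk).mul_left (a.eval k)

theorem sub_mul (h : EvalDvd g f) (q : R[X]) : EvalDvd g (f - g * q) := fun k hk => by
  simpa only [eval_sub, eval_mul] using dvd_sub (h k hk) (dvd_mul_right _ _)

theorem of_C_mul [IsDomain R] {c : R} (hc : c ≠ 0) (h : EvalDvd (C c * g) f) : EvalDvd g f :=
  fun k hk => by
    have hck : (C c * g).eval k ≠ 0 := by simpa only [eval_mul, eval_C] using mul_ne_zero hc hk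
    exact (eval_dvd (dvd_mul_left g (C c))).trans (h k hck)

end EvalDvd

theorem exists_C_mul_sub_mul_degree_lt [IsDomain R] (f : R[X]) {g : R[X]} (hg : g ≠ 0) :
    ∃ c : R, c ≠ 0 ∧ ∃ q : R[X], (C c * f - g * q).degree < g.degree := by
  let φ := algebraMap R (FractionRing R)
  have hφ : Function.Injective φ := IsFractionRing.injective R (FractionRing R)
  obtain ⟨c, hc0, hc⟩ := IsLocalization.integerNormalization_spec R⁰ (f.map φ / g.map φ)
  refine ⟨c, nonZeroDivisors.ne_zero hc0,
    IsLocalization.integerNormalization R⁰ (f.map φ / g.map φ), ?_⟩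
  rw [← degree_map_eq_of_injective hφ, ← degree_map_eq_of_injective hφ g]
  calc _ = (c • (f.map φ % g.map φ)).degree := by
        simp only [Polynomial.map_sub, Polynomial.map_mul, map_C, hc,
          EuclideanDomain.mod_eq_sub_mul_div, Algebra.smul_def, Polynomial.algebraMap_apply, φ]
        ring_nf
    _ ≤ (f.map φ % g.map φ).degree := degree_smul_le _ _
    _ < (g.map φ).degree := EuclideanDomain.mod_lt _ ((Polynomial.map_ne_zero_iff hφ).mpr hg)

theorem IsPrimitive.dvd_of_dvd_C_mul [IsDomain R] [IsGCDMonoid R] {f g : R[X]}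
    (hg : g.IsPrimitive) {c : R} (hc : c ≠ 0) (h : g ∣ C c * f) : g ∣ f := by
  let φ := algebraMap R (FractionRing R)
  have hφc : IsUnit (C (φ c)) :=
    isUnit_C.mpr (IsUnit.mk0 _ ((map_ne_zero_iff φ (IsFractionRing.injective _ _)).mpr hc))
  refine hg.dvd_of_fraction_map_dvd_fraction_map (K := FractionRing R) ?_
  simpa only [Polynomial.map_mul, map_C, hφc.dvd_mul_left] using Polynomial.map_dvd φ h

theorem exists_eq_C_mul_isPrimitive [IsDomain R] [IsGCDMonoid R] {g : R[X]} (hg : g ≠ 0) :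
    ∃ c : R, c ≠ 0 ∧ ∃ p : R[X], p.IsPrimitive ∧ g = C c * p := by
  obtain ⟨_⟩ : Nonempty (NormalizedGCDMonoid R) := inferInstance
  exact ⟨g.content, content_eq_zero_iff.not.mpr hg, g.primPart, g.isPrimitive_primPart,
    g.eq_C_content_mul_primPart⟩

end Polynomial

section

variable {D : Type*} [CommRing D] [IsDomain D]

theorem DPP.eq_zero_of_degree_lt (hD : DPP D) {g r : D[X]} (h : EvalDvd g r)
    (hr : r.degree < g.degree) : r = 0 := by
  by_contra hr0
  exact (hD r g h).elim hr0 (natDegree_lt_natDegree hr0 hr).not_ge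

theorem EPP.of_DPP [IsGCDMonoid D] (hD : DPP D) : EPP D := by
  intro f g hg _ hfg
  obtain ⟨c, hc, q, hr⟩ := exists_C_mul_sub_mul_degree_lt f hg.ne_zero
  have hr0 := hD.eq_zero_of_degree_lt ((EvalDvd.mul_left hfg (C c)).sub_mul q) hr
  exact hg.dvd_of_dvd_C_mul hc ⟨q, sub_eq_zero.mp hr0⟩

theorem DPP.of_EPP [IsGCDMonoid D] (hE : EPP D) : DPP D := by
  intro f g hfg
  by_cases hf : f = 0
  · exact .inl hf
  by_cases hg : g.natDegree = 0
  · exact .inr (hg ▸ Nat.zero_le _)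
  obtain ⟨c, hc, p, hp, rfl⟩ :=
    exists_eq_C_mul_isPrimitive (ne_zero_of_natDegree_gt (Nat.pos_of_ne_zero hg))
  rw [natDegree_C_mul hc] at hg ⊢
  have hpf : p ∣ f := hE f p hp (Nat.one_le_iff_ne_zero.mpr hg) (EvalDvd.of_C_mul hc hfg)
  exact .inr (natDegree_le_of_dvd hpf hf)

end

theorem DPP_iff_EPP (D : Type*) [CommRing D] [IsDomain D]
    [UniqueFactorizationMonoid D] : DPP D ↔ EPP D :=
  ⟨EPP.of_DPP, DPP.of_EPP⟩
end

section
/- Let f, g ∈ ℤ[x] with g primitive and deg g ≥ 1, and suppose there exists N ∈ ℤ such that for every integer k ≥ N, if g(k) ≠ 0 then g(k) ∣ f(k) in ℤ. Then g divides f in ℤ[x]. -/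
/-!
Clearing denominators in the division of `f` by `g` over `ℚ` gives `d f = g t + s` in `ℤ[X]`
with `d ≠ 0` and `deg s < deg g`. At every large integer `k` with `g(k) ≠ 0`, `g(k)` divides
`s(k)`, while eventually `|s(k)| < |g(k)|`; so `s` has infinitely many roots and vanishes.
Hence `g ∣ d f`, and since `g` is primitive, Gauss's lemma gives `g ∣ f`.
-/

open Polynomial
open scoped nonZeroDivisors

namespace Polynomial

theorem eq_zero_of_infinite_eval_dvd_eval {P Q : ℤ[X]} (hdeg : P.degree < Q.degree)
    (h : {a | Q.eval a ∣ P.eval a}.Infinite) : P = 0 := by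
  apply eq_zero_of_infinite_isRoot
  refine (h.sdiff (finite_abs_eval_le_of_degree_lt hdeg)).mono fun a ha ↦ ?_
  obtain ⟨hdvd, hlt⟩ := ha
  rw [Set.mem_ofPred_eq, not_le] at hlt
  exact Int.eq_zero_of_abs_lt_dvd ((abs_dvd _ _).mpr hdvd) hlt

section FractionField

variable {R : Type*} [CommRing R] [IsDomain R]

theorem exists_C_mul_eq_mul_add_degree_lt (p : R[X]) {q : R[X]} (hq : q ≠ 0) :
    ∃ d ≠ (0 : R), ∃ t s : R[X], s.degree < q.degree ∧ C d * p = q * t + s := by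
  set K := FractionRing R
  set ι := algebraMap R K
  have hι : Function.Injective ι := IsFractionRing.injective R K
  obtain ⟨d, hd, hdt⟩ := IsLocalization.integerNormalization_spec R⁰ (p.map ι / q.map ι)
  set t := IsLocalization.integerNormalization R⁰ (p.map ι / q.map ι)
  refine ⟨d, nonZeroDivisors.ne_zero hd, t, C d * p - q * t, ?_, by ring⟩
  have hmap : (C d * p - q * t).map ι = C (ι d) * (p.map ι % q.map ι) := by
    rw [EuclideanDomain.mod_eq_sub_mul_div, Polynomial.map_sub, Polynomial.map_mul,
      Polynomial.map_mul, map_C, hdt, Algebra.smul_def, algebraMap_apply]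
    ring
  rw [← degree_map_eq_of_injective hι, hmap, ← degree_map_eq_of_injective hι q,
    degree_C_mul ((map_ne_zero_iff _ hι).mpr (nonZeroDivisors.ne_zero hd))]
  exact EuclideanDomain.mod_lt _ ((Polynomial.map_ne_zero_iff hι).mpr hq)

theorem IsPrimitive.dvd_of_dvd_C_mul_s7 [NormalizedGCDMonoid R] {p q : R[X]} (hp : p.IsPrimitive)
    {d : R} (hd : d ≠ 0) (h : p ∣ C d * q) : p ∣ q := by
  set ι := algebraMap R (FractionRing R)
  have hunit : IsUnit (C (ι d)) :=
    isUnit_C.mpr ((map_ne_zero_iff _ (IsFractionRing.injective R _)).mpr hd).isUnit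
  apply hp.dvd_of_fraction_map_dvd_fraction_map (K := FractionRing R)
  rw [← hunit.dvd_mul_left, ← map_C, ← Polynomial.map_mul]
  exact Polynomial.map_dvd ι h

end FractionField

end Polynomial

theorem int_epp_eventually_general (f g : ℤ[X]) (hprim : g.IsPrimitive)
    (h : ∃ N : ℤ, ∀ k : ℤ, N ≤ k → g.eval k ≠ 0 → g.eval k ∣ f.eval k) :
    g ∣ f := by
  obtain ⟨N, hN⟩ := h
  have hg : g ≠ 0 := hprim.ne_zero
  obtain ⟨d, hd, t, s, hs, hdf⟩ := exists_C_mul_eq_mul_add_degree_lt f hg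
  suffices s = 0 from hprim.dvd_of_dvd_C_mul_s7 hd ⟨t, by rw [hdf, this, add_zero]⟩
  apply eq_zero_of_infinite_eval_dvd_eval hs
  refine ((Set.Ici_infinite N).sdiff (finite_setOfPred_isRoot hg)).mono fun k hk ↦ ?_
  obtain ⟨hkN, hk⟩ := hk
  have hdfk : d * f.eval k = g.eval k * t.eval k + s.eval k := by
    simpa using congrArg (eval k) hdf
  rw [Set.mem_ofPred_eq, ← dvd_add_right (dvd_mul_right _ _), ← hdfk]
  exact (hN k hkN hk).mul_left d

theorem int_epp_eventually (f g : ℤ[X]) (hprim : g.IsPrimitive)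
    (hdeg : 1 ≤ g.natDegree)
    (h : ∃ N : ℤ, ∀ k : ℤ, N ≤ k → g.eval k ≠ 0 → g.eval k ∣ f.eval k) :
    g ∣ f :=
  int_epp_eventually_general f g hprim h
end

section
/- Let D be a unique factorization domain. If D satisfies the strong evaluation polynomial property (SEPP), then D satisfies the evaluation polynomial property (EPP). -/
/-!
Factor the primitive polynomial `g` into irreducibles. An irreducible factor `p` of a primitive
polynomial is itself primitive, hence nonconstant, and `p(k) ∣ g(k) ∣ f(k)` for all but finitely
many `k`; since the set of good `k` inside the infinite set `I` provided by SEPP is still infinite,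
SEPP gives `p ∣ f`. Cancelling `p` (possible away from its finitely many roots) and inducting on
the factorization of `g` yields `g ∣ f`.
-/

open Polynomial

def SEPP (D : Type*) [CommRing D] [IsDomain D] : Prop :=
  ∀ f g : D[X], Irreducible g → 1 ≤ g.natDegree →
    ∃ I : Set D, I.Infinite ∧ ∀ H : Set D, H ⊆ I → H.Infinite →
      (∀ k ∈ H, g.eval k ≠ 0 → g.eval k ∣ f.eval k) → g ∣ f

open Filter

namespace Polynomial

theorem eventually_cofinite_eval_ne_zero {D : Type*} [CommRing D] [IsDomain D] {p : D[X]}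
    (hp : p ≠ 0) : ∀ᶠ k in cofinite, p.eval k ≠ 0 := by
  simpa [eventually_cofinite] using finite_setOfPred_isRoot hp

theorem IsPrimitive.one_le_natDegree_of_irreducible {R : Type*} [CommSemiring R] {p : R[X]}
    (hprim : p.IsPrimitive) (hirr : Irreducible p) : 1 ≤ p.natDegree := by
  by_contra! hdeg
  have hC : p = C (p.coeff 0) := eq_C_of_natDegree_eq_zero (Nat.lt_one_iff.mp hdeg)
  exact hirr.not_isUnit (hC ▸ isUnit_C.mpr (hprim _ (hC ▸ dvd_refl _)))

end Polynomial

namespace SEPP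

variable {D : Type*} [CommRing D] [IsDomain D]

theorem dvd_of_eventually_dvd (h : SEPP D) {f p : D[X]} (hirr : Irreducible p)
    (hdeg : 1 ≤ p.natDegree) (hdvd : ∀ᶠ k in cofinite, p.eval k ∣ f.eval k) : p ∣ f := by
  obtain ⟨I, hI, hIH⟩ := h f p hirr hdeg
  exact hIH (I \ {k | ¬ p.eval k ∣ f.eval k}) Set.sdiff_subset (hI.sdiff hdvd)
    fun k hk _ => not_not.mp hk.2

theorem dvd_of_eventually_dvd_of_isPrimitive [UniqueFactorizationMonoid D] (h : SEPP D)
    {g : D[X]} (hprim : g.IsPrimitive) {f : D[X]}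
    (hdvd : ∀ᶠ k in cofinite, g.eval k ∣ f.eval k) : g ∣ f := by
  induction g using WfDvdMonoid.induction_on_irreducible generalizing f with
  | zero => exact absurd rfl hprim.ne_zero
  | unit u hu => exact hu.dvd
  | mul a p _ hp ih =>
    have hdeg : 1 ≤ p.natDegree :=
      (isPrimitive_of_dvd hprim (dvd_mul_right p a)).one_le_natDegree_of_irreducible hp
    have hpf : p ∣ f := h.dvd_of_eventually_dvd hp hdeg <| hdvd.mono fun k hk =>
      (eval_mul (p := p) ▸ dvd_mul_right _ _).trans hk
    obtain ⟨f₁, rfl⟩ := hpf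
    have hdvd₁ : ∀ᶠ k in cofinite, a.eval k ∣ f₁.eval k := by
      filter_upwards [hdvd, eventually_cofinite_eval_ne_zero hp.ne_zero] with k hk hpk
      rw [eval_mul, eval_mul] at hk
      exact (mul_dvd_mul_iff_left hpk).mp hk
    exact mul_dvd_mul_left p (ih (isPrimitive_of_dvd hprim (dvd_mul_left a p)) hdvd₁)

end SEPP

theorem SEPP_implies_EPP (D : Type*) [CommRing D] [IsDomain D]
    [UniqueFactorizationMonoid D] (h : SEPP D) : EPP D := by
  intro f g hprim _ hdvd
  refine h.dvd_of_eventually_dvd_of_isPrimitive hprim ?_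
  filter_upwards [eventually_cofinite_eval_ne_zero hprim.ne_zero] with k hk using hdvd k hk
end

section
/- Let D be a unique factorization domain. If D satisfies the infinite primes property (IPP), then D satisfies the strong evaluation polynomial property (SEPP). -/
open Polynomial

/-!
By Gauss's lemma and the resultant, `g ∤ f` gives `g * p + f * q = C c` with `c ≠ 0`, so
`g(k) ∣ f(k)` forces `g(k) ∣ c`. If this held for all but finitely many `k`, then `g(k) ∣ c` along
a whole progression `z + α D` avoiding the exceptions. Refining the step to `α c²` makes every
value `g(z + α c² t)` equal to `g(z)` times a number `≡ 1 (mod c)` dividing `c`, i.e. a unit; so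
`t ↦ g(z + α c² t) / g(z)` is a nonconstant polynomial without nonunit values, against the IPP.
-/

section
variable {R : Type*} [CommRing R]

theorem Polynomial.exists_mul_add_mul_eq_C_of_isCoprime_map {S : Type*} [CommRing S] [IsDomain S]
    {φ : R →+* S} (hφ : Function.Injective φ) {f g : R[X]} (hg : g.natDegree ≠ 0)
    (hfg : IsCoprime (g.map φ) (f.map φ)) :
    ∃ c ≠ 0, ∃ p q : R[X], g * p + f * q = C c := by
  obtain ⟨p, q, -, -, hpq⟩ := exists_mul_add_mul_eq_C_resultant g f le_rfl le_rfl (Or.inl hg)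
  refine ⟨_, fun hc => resultant_ne_zero _ _ hfg ?_, p, q, hpq⟩
  rw [natDegree_map_eq_of_injective hφ, natDegree_map_eq_of_injective hφ, resultant_map_map, hc,
    map_zero]

theorem Polynomial.exists_comp_eq_C_eval_add (g : R[X]) (z b : R) :
    ∃ K, g.comp (C b * X + C z) = C (g.eval z) + C b * X * K := by
  obtain ⟨K, hK⟩ := X_sub_C_dvd_sub_C_eval (p := g) (a := z)
  refine ⟨K.comp (C b * X + C z), ?_⟩
  have := congrArg (·.comp (C b * X + C z)) hK
  simp only [sub_comp, mul_comp, X_comp, C_comp] at this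
  linear_combination this

variable [IsDomain R]

theorem Irreducible.isCoprime_map_of_not_dvd [UniqueFactorizationMonoid R] (K : Type*) [Field K]
    [Algebra R K] [IsFractionRing R K] {f g : R[X]} (hg : Irreducible g) (hdeg : g.natDegree ≠ 0)
    (hgf : ¬g ∣ f) : IsCoprime (g.map (algebraMap R K)) (f.map (algebraMap R K)) := by
  have hprim := hg.isPrimitive hdeg
  rw [(hprim.irreducible_iff_irreducible_map_fraction_map).mp hg |>.coprime_iff_not_dvd,
    ← hprim.dvd_iff_fraction_map_dvd_fraction_map K]
  exact hgf

theorem Irreducible.exists_mul_add_mul_eq_C_of_not_dvd [UniqueFactorizationMonoid R] {f g : R[X]}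
    (hg : Irreducible g) (hdeg : g.natDegree ≠ 0) (hgf : ¬g ∣ f) :
    ∃ c ≠ 0, ∃ p q : R[X], g * p + f * q = C c :=
  exists_mul_add_mul_eq_C_of_isCoprime_map (IsFractionRing.injective R (FractionRing R)) hdeg
    (hg.isCoprime_map_of_not_dvd (FractionRing R) hdeg hgf)

theorem exists_add_mul_notMem_finset {E : Finset R} {z m : R} (hz : z ∉ E) (hm0 : m ≠ 0)
    (hm : ¬IsUnit m) : ∃ α ≠ 0, ∀ t, z + α * t ∉ E := by
  -- If `z + α t = e ∈ E`, then `e - z = α t` is a multiple of `(e - z) * m`, so `m` is a unit.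
  refine ⟨m * ∏ e ∈ E, (e - z), mul_ne_zero hm0 (Finset.prod_ne_zero_iff.mpr fun e he =>
    sub_ne_zero.mpr (ne_of_mem_of_not_mem he hz)), fun t he => hm ?_⟩
  obtain ⟨Q, hQ⟩ := Finset.dvd_prod_of_mem (fun e => e - z) he
  have hne : z + m * (∏ e ∈ E, (e - z)) * t - z ≠ 0 :=
    sub_ne_zero.mpr (ne_of_mem_of_not_mem he hz)
  refine .of_mul_eq_one (Q * t) (mul_left_cancel₀ hne ?_)
  linear_combination -(m * t) * hQ

theorem Polynomial.exists_forall_isUnit_eval_of_eval_add_mul_dvd {g : R[X]} {z α c : R}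
    (hdeg : 1 ≤ g.natDegree) (hα : α ≠ 0) (hc : c ≠ 0) (hdvd : ∀ t, g.eval (z + α * t) ∣ c) :
    ∃ G : R[X], 1 ≤ G.natDegree ∧ ∀ t, IsUnit (G.eval t) := by
  obtain ⟨c', rfl⟩ : g.eval z ∣ c := by simpa using hdvd 0
  set w := g.eval z
  have hw : w ≠ 0 := left_ne_zero_of_mul hc
  obtain ⟨K, hK⟩ := g.exists_comp_eq_C_eval_add z (α * (w * c') ^ 2)
  set G := 1 + C (w * c') * (C (α * c') * X * K)
  have hG : g.comp (C (α * (w * c') ^ 2) * X + C z) = C w * G := by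
    rw [hK]; simp only [G, C_mul, C_pow]; ring
  refine ⟨G, ?_, fun t => isUnit_of_dvd_one ?_⟩
  · rw [← natDegree_C_mul hw, ← hG, natDegree_comp, natDegree_linear (by positivity), mul_one]
    exact hdeg
  · have hGt : G.eval t ∣ w * c' := by
      refine dvd_mul_of_dvd_right ((mul_dvd_mul_iff_left hw).mp ?_) w
      rw [← eval_C (a := w) (x := t), ← eval_mul, ← hG, eval_comp]
      simpa [mul_assoc, add_comm] using hdvd ((w * c') ^ 2 * t)
    have := dvd_sub (dvd_refl (G.eval t)) (hGt.mul_right ((C (α * c') * X * K).eval t))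
    simpa [G] using this
end

namespace IPP
variable {D : Type*} [CommRing D] [IsDomain D]

theorem exists_eval_ne_zero_not_isUnit (h : IPP D) {G : D[X]} (hG : 1 ≤ G.natDegree) :
    ∃ k, G.eval k ≠ 0 ∧ ¬IsUnit (G.eval k) := by
  obtain ⟨p, hp, k, hk, hpk⟩ := (h G hG).nonempty
  exact ⟨k, hk, fun hu => hp.not_isUnit (isUnit_of_dvd_unit hpk hu)⟩

theorem infinite (h : IPP D) : Infinite D :=
  Set.infinite_univ_iff.mp ((h X (by simp)).mono (Set.subset_univ _))

theorem infinite_setOf_eval_ne_zero_not_dvd (h : IPP D) {g : D[X]} {c : D}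
    (hg : 1 ≤ g.natDegree) (hc : c ≠ 0) : {k | g.eval k ≠ 0 ∧ ¬g.eval k ∣ c}.Infinite := by
  suffices hinf : {k | ¬g.eval k ∣ c}.Infinite from
    (hinf.sdiff (finite_setOfPred_isRoot (ne_zero_of_natDegree_gt hg))).mono
      fun k hk => ⟨hk.2, hk.1⟩
  intro hfin
  have := h.infinite
  obtain ⟨z, hz⟩ := Infinite.exists_notMem_finset hfin.toFinset
  obtain ⟨m, hm0, hm⟩ := h.exists_eval_ne_zero_not_isUnit (G := X) (by simp)
  rw [eval_X] at hm0 hm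
  obtain ⟨α, hα, hzα⟩ := exists_add_mul_notMem_finset hz hm0 hm
  obtain ⟨G, hG, hGunit⟩ := exists_forall_isUnit_eval_of_eval_add_mul_dvd hg hα hc
    fun t => by simpa using hzα t
  obtain ⟨k, -, hk⟩ := h.exists_eval_ne_zero_not_isUnit hG
  exact hk (hGunit k)

end IPP

theorem IPP_implies_SEPP (D : Type*) [CommRing D] [IsDomain D]
    [UniqueFactorizationMonoid D] (h : IPP D) : SEPP D := by
  intro f g hg hdeg
  by_cases hgf : g ∣ f
  · exact ⟨Set.univ, Set.infinite_univ_iff.mpr h.infinite, fun _ _ _ _ => hgf⟩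
  obtain ⟨c, hc, p, q, hpq⟩ := hg.exists_mul_add_mul_eq_C_of_not_dvd (by omega) hgf
  have hval (k : D) : g.eval k * p.eval k + f.eval k * q.eval k = c := by
    simpa using congrArg (eval k) hpq
  have hsub : {k | g.eval k ≠ 0 ∧ ¬g.eval k ∣ c} ⊆ {k | g.eval k ≠ 0 ∧ ¬g.eval k ∣ f.eval k} :=
    fun k hk => ⟨hk.1, fun hkf => hk.2 (hval k ▸ dvd_add (dvd_mul_right _ _) (hkf.mul_right _))⟩
  refine ⟨_, (h.infinite_setOf_eval_ne_zero_not_dvd hdeg hc).mono hsub, fun H hHI hH hdvd => ?_⟩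
  obtain ⟨k, hk⟩ := hH.nonempty
  exact ((hHI hk).2 (hdvd k hk (hHI hk).1)).elim
end

section
/- Let D be a unique factorization domain that contains at least one prime element and has only finitely many units. Then D satisfies the evaluation polynomial property (EPP). -/
open Polynomial

/-!
Cancel the greatest common factor in `D[X]`: `g = d * Q` and `f = d * P` with `P`, `Q`
relatively prime. By Gauss's lemma they remain coprime over the fraction field, so their
resultant `r` is nonzero, and a Bézout identity `Q * a + P * b = r` shows that `Q(k) ∣ r`
whenever `Q(k) ∣ P(k)`, i.e. for all `k` off the finitely many roots of `g`. With finitely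
many units, `r` has finitely many divisors, and a nonconstant `Q` takes each value only
finitely often, while `D` is infinite because it contains the powers of a prime. Hence `Q`
is constant, so a unit since `g` is primitive, and `g ∣ f`.
-/

open Filter IsLocalization
open scoped nonZeroDivisors

theorem infinite_of_prime {M : Type*} [CommMonoidWithZero M] [IsCancelMulZero M] {p : M}
    (hp : Prime p) : Infinite M :=
  Infinite.of_injective _ (pow_injective_of_not_isUnit hp.not_isUnit hp.ne_zero)

theorem UniqueFactorizationMonoid.finite_setOf_dvd {M : Type*} [CommMonoidWithZero M]
    [UniqueFactorizationMonoid M] [Finite Mˣ] {a : M} (ha : a ≠ 0) : {x | x ∣ a}.Finite := by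
  have := Fintype.ofFinite Mˣ
  exact Set.finite_coe_iff.mp (@Finite.of_fintype _ (fintypeSubtypeDvd a ha))

namespace Polynomial

variable {R : Type*} [CommRing R]

theorem finite_preimage_eval [IsDomain R] {P : R[X]} (hP : 0 < P.natDegree) {s : Set R}
    (hs : s.Finite) : ((fun k => P.eval k) ⁻¹' s).Finite := by
  refine (hs.biUnion fun v _ => finite_setOfPred_isRoot (p := P - C v) ?_).subset fun k hk =>
    Set.mem_biUnion hk (by simp)
  exact ne_zero_of_natDegree_gt (natDegree_sub_C (a := v) ▸ hP)

theorem eval_dvd_resultant_of_eval_dvd_eval {P Q : R[X]} (hQ : 0 < Q.natDegree) {k : R}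
    (h : Q.eval k ∣ P.eval k) : Q.eval k ∣ resultant Q P := by
  obtain ⟨a, b, -, -, hab⟩ := exists_mul_add_mul_eq_C_resultant Q P le_rfl le_rfl (.inl hQ.ne')
  have := congrArg (eval k) hab
  rw [eval_add, eval_mul, eval_mul, eval_C] at this
  exact this ▸ dvd_add (dvd_mul_right _ _) (h.mul_right _)

theorem resultant_ne_zero_of_isCoprime_map {K : Type*} [Field K] {φ : R →+* K}
    (hφ : Function.Injective φ) {P Q : R[X]} (h : IsCoprime (P.map φ) (Q.map φ)) :
    resultant P Q ≠ 0 := by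
  intro h0
  have hmap : resultant (P.map φ) (Q.map φ) = φ (resultant P Q) := by
    rw [← resultant_map_map, natDegree_map_eq_of_injective hφ,
      natDegree_map_eq_of_injective hφ]
  exact (resultant_eq_zero_iff.mp (by rw [hmap, h0, map_zero])).2 h

theorem isCoprime_map_of_isRelPrime [IsDomain R] [IsGCDMonoid R] (K : Type*) [Field K]
    [Algebra R K] [IsFractionRing R K] {P Q : R[X]} (h : IsRelPrime P Q) :
    IsCoprime (P.map (algebraMap R K)) (Q.map (algebraMap R K)) := by
  have := Classical.arbitrary (NormalizedGCDMonoid R)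
  have hinj := IsFractionRing.injective R K
  rw [← isRelPrime_iff_isCoprime]
  intro r hrP hrQ
  obtain rfl | hr := eq_or_ne r 0
  · rw [zero_dvd_iff, Polynomial.map_eq_zero_iff hinj] at hrP hrQ
    subst hrP hrQ
    exact absurd (h dvd_rfl dvd_rfl) not_isUnit_zero
  -- `r` is, up to a unit of `K[X]`, the image of the primitive part of a scaled copy of it
  set r' := integerNormalization R⁰ r
  obtain ⟨b, hb, hr'⟩ := integerNormalization_spec R⁰ r
  have hdvd : r'.primPart.map (algebraMap R K) ∣ r := by
    have hb0 : algebraMap R K b ≠ 0 := by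
      simpa [hinj.eq_iff] using nonZeroDivisors.ne_zero hb
    rw [← (isUnit_C.2 hb0.isUnit).dvd_mul_left, ← algebraMap_apply, ← Algebra.smul_def, ← hr']
    exact map_dvd _ (primPart_dvd r')
  refine isUnit_or_eq_zero_of_isUnit_integerNormalization_primPart hr (h ?_ ?_)
  · exact (isPrimitive_primPart r').dvd_of_fraction_map_dvd_fraction_map (hdvd.trans hrP)
  · exact (isPrimitive_primPart r').dvd_of_fraction_map_dvd_fraction_map (hdvd.trans hrQ)

theorem natDegree_eq_zero_of_eventually_eval_dvd_eval [IsDomain R]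
    [UniqueFactorizationMonoid R] [Finite Rˣ] [Infinite R] {P Q : R[X]} (hPQ : IsRelPrime P Q)
    (h : ∀ᶠ k in cofinite, Q.eval k ∣ P.eval k) : Q.natDegree = 0 := by
  by_contra hQ
  have hres : resultant Q P ≠ 0 :=
    resultant_ne_zero_of_isCoprime_map (IsFractionRing.injective R (FractionRing R))
      (isCoprime_map_of_isRelPrime _ hPQ.symm)
  have hfin := finite_preimage_eval (Nat.pos_of_ne_zero hQ)
    (UniqueFactorizationMonoid.finite_setOf_dvd hres)
  obtain ⟨k, hk, hk'⟩ := (h.and hfin.eventually_cofinite_notMem).exists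
  exact hk' (eval_dvd_resultant_of_eval_dvd_eval (Nat.pos_of_ne_zero hQ) hk)

end Polynomial

theorem EPP_of_exists_prime_of_finite_units (D : Type*) [CommRing D] [IsDomain D]
    [UniqueFactorizationMonoid D] (hp : ∃ p : D, Prime p) (hu : Finite Dˣ) :
    EPP D := by
  obtain ⟨p, hp⟩ := hp
  have := infinite_of_prime hp
  intro f g hg _ hdvd
  obtain ⟨P, Q, d, hPQ, rfl, rfl⟩ :=
    UniqueFactorizationMonoid.exists_reduced_factors' f g hg.ne_zero
  have h_ev : ∀ᶠ k in cofinite, Q.eval k ∣ P.eval k := by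
    filter_upwards [(finite_setOfPred_isRoot hg.ne_zero).compl_mem_cofinite] with k hk
    have hdk : d.eval k ≠ 0 := left_ne_zero_of_mul (by simpa using hk)
    exact (mul_dvd_mul_iff_left hdk).1 (by simpa using hdvd k hk)
  obtain ⟨q, rfl⟩ : ∃ q, Q = C q :=
    ⟨_, eq_C_of_natDegree_eq_zero (natDegree_eq_zero_of_eventually_eval_dvd_eval hPQ h_ev)⟩
  exact (isUnit_C.2 (hg q (dvd_mul_left _ _))).mul_right_dvd.2 (dvd_mul_right d P)
end

section
/- Let f, g ∈ ℤ[x] with g ≠ 0 be polynomials such that g(k) ∣ f(k) in ℤ for all but finitely many k ∈ ℤ. Then g divides f in ℚ[x]; that is, f/g is a polynomial with rational coefficients. In particular, ℤ is a D-ring. -/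
open Polynomial

def IsDRing (D : Type*) [CommRing D] [IsDomain D] : Prop :=
  ∀ f g : D[X], g ≠ 0 → {k : D | ¬ g.eval k ∣ f.eval k}.Finite →
    g.map (algebraMap D (FractionRing D)) ∣ f.map (algebraMap D (FractionRing D))

/-!
Divide `f` by `g` in `ℚ[X]` and clear denominators: `N f = g A + B` with `A, B ∈ ℤ[X]`,
`N ≠ 0` and `deg B < deg g`. Whenever `g(k) ∣ f(k)`, also `g(k) ∣ B(k)`, while `|B(k)| < |g(k)|`
for all but finitely many `k`; so `B` has infinitely many roots, `B = 0`, and `g ∣ N f`.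
-/

namespace Polynomial

theorem exists_C_mul_eq_mul_add_degree_lt_s11 {R : Type*} [CommRing R] [IsDomain R] (f : R[X])
    {g : R[X]} (hg : g ≠ 0) :
    ∃ N : R, N ≠ 0 ∧ ∃ A B : R[X], C N * f = g * A + B ∧ B.degree < g.degree := by
  let φ := algebraMap R (FractionRing R)
  have hφ : Function.Injective φ := IsFractionRing.injective R (FractionRing R)
  have hg' : g.map φ ≠ 0 := (Polynomial.map_ne_zero_iff hφ).mpr hg
  set q := f.map φ / g.map φ
  set r := f.map φ % g.map φ
  set Q := IsLocalization.integerNormalization (nonZeroDivisors R) q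
  set B := IsLocalization.integerNormalization (nonZeroDivisors R) r
  obtain ⟨a, ha0, ha⟩ : ∃ a ∈ nonZeroDivisors R, Q.map φ = a • q :=
    IsLocalization.integerNormalization_spec _ q
  obtain ⟨b, hb0, hb⟩ : ∃ b ∈ nonZeroDivisors R, B.map φ = b • r :=
    IsLocalization.integerNormalization_spec _ r
  refine ⟨a * b, mul_ne_zero (nonZeroDivisors.ne_zero ha0) (nonZeroDivisors.ne_zero hb0),
    C b * Q, C a * B, ?_, ?_⟩
  · apply map_injective φ hφ
    have hfqr : g.map φ * q + r = f.map φ := EuclideanDomain.div_add_mod _ _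
    simp only [Polynomial.map_add, Polynomial.map_mul, map_C, ha, hb]
    rw [← hfqr, algebra_compatible_smul (FractionRing R) a, algebra_compatible_smul (FractionRing R) b,
      smul_eq_C_mul, smul_eq_C_mul, map_mul, C_mul]
    ring
  · calc (C a * B).degree = B.degree := degree_C_mul (nonZeroDivisors.ne_zero ha0)
      _ = (B.map φ).degree := (degree_map_eq_of_injective hφ B).symm
      _ ≤ r.degree := hb ▸ degree_smul_le _ _
      _ < (g.map φ).degree := EuclideanDomain.mod_lt _ hg'
      _ = g.degree := degree_map_eq_of_injective hφ g

theorem eq_zero_of_infinite_eval_dvd {P Q : ℤ[X]} (h : P.degree < Q.degree)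
    (hdvd : {a | Q.eval a ∣ P.eval a}.Infinite) : P = 0 := by
  apply eq_zero_of_infinite_isRoot
  refine (hdvd.sdiff (finite_abs_eval_le_of_degree_lt h)).mono fun a ha ↦ ?_
  simp only [Set.mem_sdiff, Set.mem_ofPred_eq, not_le] at ha
  exact Int.eq_zero_of_abs_lt_dvd ((abs_dvd _ _).mpr ha.1) ha.2

theorem map_dvd_map_of_infinite_eval_dvd {f g : ℤ[X]} (hg : g ≠ 0)
    (hdvd : {a | g.eval a ∣ f.eval a}.Infinite) :
    g.map (algebraMap ℤ ℚ) ∣ f.map (algebraMap ℤ ℚ) := by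
  obtain ⟨N, hN, A, B, hfg, hB⟩ := exists_C_mul_eq_mul_add_degree_lt_s11 f hg
  have hBdvd (a : ℤ) (ha : g.eval a ∣ f.eval a) : g.eval a ∣ B.eval a := by
    have hBa : B.eval a = N * f.eval a - g.eval a * A.eval a := by
      have := congrArg (eval a) hfg
      rw [eval_mul, eval_C, eval_add, eval_mul] at this
      linarith
    exact hBa ▸ dvd_sub (ha.mul_left N) (dvd_mul_right _ _)
  rw [eq_zero_of_infinite_eval_dvd hB (hdvd.mono hBdvd), add_zero] at hfg
  have hN' : algebraMap ℤ ℚ N ≠ 0 := Int.cast_ne_zero.mpr hN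
  refine (dvd_C_mul hN').mp ⟨A.map (algebraMap ℤ ℚ), ?_⟩
  simpa only [Polynomial.map_mul, map_C] using congrArg (map (algebraMap ℤ ℚ)) hfg

end Polynomial

theorem IsDRing.of_isFractionRing {D : Type*} [CommRing D] [IsDomain D] (K : Type*) [Field K]
    [Algebra D K] [IsFractionRing D K]
    (h : ∀ f g : D[X], g ≠ 0 → {k : D | ¬ g.eval k ∣ f.eval k}.Finite →
      g.map (algebraMap D K) ∣ f.map (algebraMap D K)) :
    IsDRing D := fun f g hg hfin ↦ by
  let e : K →ₐ[D] FractionRing D := (FractionRing.algEquiv D K).symm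
  simpa only [Polynomial.map_map, e.comp_algebraMap] using
    Polynomial.map_dvd (e : K →+* FractionRing D) (h f g hg hfin)

theorem int_is_DRing :
    (∀ f g : ℤ[X], g ≠ 0 → {k : ℤ | ¬ g.eval k ∣ f.eval k}.Finite →
      g.map (algebraMap ℤ ℚ) ∣ f.map (algebraMap ℤ ℚ)) ∧ IsDRing ℤ := by
  have hℤ : ∀ f g : ℤ[X], g ≠ 0 → {k : ℤ | ¬ g.eval k ∣ f.eval k}.Finite →
      g.map (algebraMap ℤ ℚ) ∣ f.map (algebraMap ℤ ℚ) := fun f g hg hfin ↦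
    map_dvd_map_of_infinite_eval_dvd hg (by simpa only [Set.compl_ofPred, not_not] using hfin.infinite_compl)
  exact ⟨hℤ, IsDRing.of_isFractionRing ℚ hℤ⟩
end

section
/- Let D be an integral domain that is not a field. Then D is not a D-ring if and only if there exists a nonconstant polynomial f ∈ D[x] such that f(k) is a unit of D for every k ∈ D. -/
/-!
If `g(k) ∣ f(k)` for almost all `k ∈ D` but `g ∤ f` over the fraction field, dividing `f` and `g`
by their gcd leaves a nonconstant cofactor `G` of `g` coprime to the cofactor of `f`. Clearing
denominators in a Bézout identity for the cofactors yields a nonconstant `P ∈ D[X]` and `e ≠ 0`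
with `P(k) ∣ e` for almost all `k`. Since `D` has a nonzero nonunit, some arithmetic progression
`m D + b` with `e² ∣ m`, `m ≠ 0` avoids the finitely many exceptions; then
`P(m X + b) = P(b) · (1 + e W)`, and the values of `1 + e W` divide `e`, hence divide `1`.
Conversely, a nonconstant unit-valued `f` satisfies `f(k) ∣ 1` for every `k` but `f ∤ 1`.
-/

open Polynomial

namespace Polynomial

attribute [local instance] Polynomial.algebra Polynomial.isLocalization in
theorem exists_mem_forall_map_eq_smul {R S : Type*} [CommRing R] [CommRing S] [Algebra R S]
    (M : Submonoid R) [IsLocalization M S] {ι : Type*} [Finite ι] (p : ι → S[X]) :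
    ∃ c ∈ M, ∀ i, ∃ P : R[X], P.map (algebraMap R S) = c • p i := by
  obtain ⟨⟨_, c, hc, rfl⟩, h⟩ :=
    IsLocalization.exist_integer_multiples_of_finite (Submonoid.map C M) p
  refine ⟨c, hc, fun i => ?_⟩
  obtain ⟨P, hP⟩ := h i
  exact ⟨P, by simpa [Submonoid.smul_def, C_eq_algebraMap, algebraMap_smul] using hP⟩

theorem exists_isCoprime_of_not_dvd {K : Type*} [Field K] {f g : K[X]} (hg : g ≠ 0)
    (hgf : ¬g ∣ f) :
    ∃ h G F : K[X], g = h * G ∧ f = h * F ∧ IsCoprime G F ∧ 0 < G.natDegree := by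
  classical
  have hh : gcd f g ≠ 0 := gcd_ne_zero_of_right hg
  have hg_eq : g = gcd f g * (g / gcd f g) :=
    (EuclideanDomain.mul_div_cancel' hh (gcd_dvd_right f g)).symm
  have hf_eq : f = gcd f g * (f / gcd f g) :=
    (EuclideanDomain.mul_div_cancel' hh (gcd_dvd_left f g)).symm
  refine ⟨gcd f g, g / gcd f g, f / gcd f g, hg_eq, hf_eq, (isCoprime_div_gcd_div_gcd hg).symm,
    Nat.pos_of_ne_zero fun hG => hgf ?_⟩
  have hGu : IsUnit (g / gcd f g) :=
    isUnit_iff_degree_eq_zero.mpr <| (degree_eq_iff_natDegree_eq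
      (right_div_gcd_ne_zero hg)).mpr hG
  rw [hg_eq, hGu.mul_right_dvd]
  exact gcd_dvd_left f g

theorem C_dvd_comp_sub_C_eval {R : Type*} [CommRing R] (p : R[X]) (m b : R) :
    C m ∣ p.comp (C m * X + C b) - C (p.eval b) := by
  obtain ⟨q, hq⟩ := X_sub_C_dvd_sub_C_eval (p := p) (a := b)
  refine ⟨X * q.comp (C m * X + C b), ?_⟩
  have h := congrArg (·.comp (C m * X + C b)) hq
  simp only [sub_comp, mul_comp, X_comp, C_comp] at h
  rw [h]
  ring

end Polynomial

section

variable {D : Type*} [CommRing D] [IsDomain D]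

theorem exists_mul_add_notMem (hD : ¬IsField D) {a : D} (ha : a ≠ 0) {T : Set D}
    (hT : T.Finite) : ∃ m b : D, m ≠ 0 ∧ a ∣ m ∧ ∀ k, m * k + b ∉ T := by
  obtain ⟨d, hd0, hdu⟩ := Ring.exists_not_isUnit_of_not_isField hD
  induction T, hT using Set.Finite.induction_on with
  | empty => exact ⟨a, 0, ha, dvd_rfl, fun _ => id⟩
  | @insert t T _ _ ih =>
    obtain ⟨m, b, hm, ham, hT⟩ := ih
    by_cases ht : ∃ k₀, m * k₀ + b = t
    · obtain ⟨k₀, rfl⟩ := ht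
      refine ⟨m * d, m * (k₀ + 1) + b, mul_ne_zero hm hd0, ham.mul_right d, fun k hk => ?_⟩
      rcases hk with hk | hk
      · -- `t` is missed because `m * (d * k + 1) = 0` would make `d` a unit
        refine hdu (.of_mul_eq_one (-k) ?_)
        have : m * (d * k + 1) = 0 := by linear_combination hk
        linear_combination -(mul_eq_zero.mp this).resolve_left hm
      · exact hT (d * k + k₀ + 1) (by convert hk using 1; ring)
    · push Not at ht
      exact ⟨m, b, hm, ham, fun k hk => hk.elim (ht k) (hT k)⟩

theorem IsCoprime.exists_integral_bezout {K : Type*} [Field K] [Algebra D K]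
    [IsFractionRing D K] {G F : K[X]} (hGF : IsCoprime G F) :
    ∃ c : D, c ≠ 0 ∧ ∃ P Q A B : D[X], P.map (algebraMap D K) = C (algebraMap D K c) * G ∧
      Q.map (algebraMap D K) = C (algebraMap D K c) * F ∧ A * P + B * Q = C (c * c) := by
  set φ := algebraMap D K
  obtain ⟨a, b, hab⟩ := hGF
  obtain ⟨c, hc, hcP⟩ := exists_mem_forall_map_eq_smul (nonZeroDivisors D) ![G, F, a, b]
  obtain ⟨P, hP⟩ : ∃ P : D[X], P.map φ = C (φ c) * G := by simpa [Algebra.smul_def] using hcP 0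
  obtain ⟨Q, hQ⟩ : ∃ Q : D[X], Q.map φ = C (φ c) * F := by simpa [Algebra.smul_def] using hcP 1
  obtain ⟨A, hA⟩ : ∃ A : D[X], A.map φ = C (φ c) * a := by simpa [Algebra.smul_def] using hcP 2
  obtain ⟨B, hB⟩ : ∃ B : D[X], B.map φ = C (φ c) * b := by simpa [Algebra.smul_def] using hcP 3
  refine ⟨c, nonZeroDivisors.ne_zero hc, P, Q, A, B, hP, hQ, ?_⟩
  apply map_injective φ (IsFractionRing.injective D K)
  simp only [Polynomial.map_add, Polynomial.map_mul, hP, hQ, hA, hB, Polynomial.map_C, map_mul]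
  linear_combination C (φ c) ^ 2 * hab

theorem exists_eval_dvd_const_of_not_dvd_map {K : Type*} [Field K] [Algebra D K]
    [IsFractionRing D K] {f g : D[X]} (hg : g ≠ 0)
    (hfin : {k : D | ¬g.eval k ∣ f.eval k}.Finite)
    (hgf : ¬g.map (algebraMap D K) ∣ f.map (algebraMap D K)) :
    ∃ P : D[X], 0 < P.natDegree ∧ ∃ e : D, e ≠ 0 ∧ {k : D | ¬P.eval k ∣ e}.Finite := by
  set φ := algebraMap D K
  have hφ : Function.Injective φ := IsFractionRing.injective D K
  have eval_map_φ (p : D[X]) (k : D) : (p.map φ).eval (φ k) = φ (p.eval k) := by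
    rw [eval_map, eval₂_at_apply]
  obtain ⟨h, G, F, hgG, hfF, hGF, hG⟩ :=
    exists_isCoprime_of_not_dvd ((Polynomial.map_ne_zero_iff hφ).mpr hg) hgf
  have hh : h ≠ 0 := left_ne_zero_of_mul (hgG ▸ (Polynomial.map_ne_zero_iff hφ).mpr hg)
  obtain ⟨c, hc, P, Q, A, B, hP, hQ, hbezout⟩ := hGF.exists_integral_bezout (D := D)
  have eval_of_map_eq {p : D[X]} {q : K[X]} (hpq : p.map φ = C (φ c) * q) (k : D) :
      φ (p.eval k) = φ c * q.eval (φ k) := by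
    rw [← eval_map_φ, hpq, eval_mul, eval_C]
  have hPdeg : P.natDegree = G.natDegree := by
    rw [← natDegree_map_eq_of_injective hφ, hP, natDegree_C_mul ((map_ne_zero_iff φ hφ).mpr hc)]
  refine ⟨P, hPdeg ▸ hG, c * c, mul_ne_zero hc hc,
    (hfin.union ((finite_setOfPred_isRoot hh).preimage hφ.injOn)).subset fun k hk => ?_⟩
  by_contra hk'
  simp only [Set.mem_union, Set.mem_ofPred_eq, Set.mem_preimage, not_or, not_not] at hk'
  obtain ⟨⟨t, ht⟩, hroot⟩ := hk'
  have hFG : F.eval (φ k) = G.eval (φ k) * φ t := by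
    apply mul_left_cancel₀ hroot
    rw [← mul_assoc, ← eval_mul, ← eval_mul, ← hgG, ← hfF, eval_map_φ, eval_map_φ, ← map_mul, ht]
  have hQP : Q.eval k = P.eval k * t := by
    apply hφ
    rw [map_mul, eval_of_map_eq hQ, eval_of_map_eq hP, hFG, mul_assoc]
  have hbezout_k := congrArg (eval k) hbezout
  rw [eval_add, eval_mul, eval_mul, eval_C, hQP] at hbezout_k
  exact hk ⟨A.eval k + B.eval k * t, by rw [← hbezout_k]; ring⟩

theorem exists_isUnit_eval_of_eval_dvd_const (hD : ¬IsField D) {P : D[X]}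
    (hP : 0 < P.natDegree) {e : D} (he : e ≠ 0) (hfin : {k : D | ¬P.eval k ∣ e}.Finite) :
    ∃ f : D[X], 0 < f.natDegree ∧ ∀ k, IsUnit (f.eval k) := by
  obtain ⟨m, b, hm, ⟨w, rfl⟩, hmb⟩ := exists_mul_add_notMem hD (pow_ne_zero 2 he) hfin
  replace hmb (k : D) : P.eval (e ^ 2 * w * k + b) ∣ e := not_not.mp (hmb k)
  obtain ⟨v, hv⟩ := hmb 0
  rw [mul_zero, zero_add] at hv
  have hc : P.eval b ≠ 0 := left_ne_zero_of_mul (hv ▸ he)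
  obtain ⟨W, hW⟩ := C_dvd_comp_sub_C_eval P (e ^ 2 * w) b
  -- as `e = P.eval b * v`, the value `P.eval b` factors out of `P.comp (C (e ^ 2 * w) * X + C b)`
  set f : D[X] := 1 + C e * (C (v * w) * W)
  have hPf : P.comp (C (e ^ 2 * w) * X + C b) = C (P.eval b) * f := by
    have hv' : C e = C (P.eval b) * C v := by rw [← C_mul, hv]
    rw [sub_eq_iff_eq_add.mp hW]
    simp only [f, C_mul, C_pow]
    linear_combination (C e * C w * W) * hv'
  refine ⟨f, ?_, fun k => ?_⟩
  · rwa [← natDegree_C_mul hc, ← hPf, natDegree_comp, natDegree_linear hm, mul_one]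
  · have hfe : f.eval k ∣ e := by
      refine (dvd_mul_left _ (P.eval b)).trans ?_
      have h := hmb k
      rwa [show e ^ 2 * w * k + b = (C (e ^ 2 * w) * X + C b).eval k by simp, ← eval_comp, hPf,
        eval_mul, eval_C] at h
    have hf : f.eval k = 1 + e * (v * w * W.eval k) := by simp [f]
    refine isUnit_of_dvd_one ((dvd_add_left (hfe.mul_right (v * w * W.eval k))).mp ?_)
    rw [← hf]

theorem not_isDRing_of_isUnit_eval {f : D[X]} (hf : 0 < f.natDegree)
    (hu : ∀ k, IsUnit (f.eval k)) : ¬IsDRing D := by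
  intro hDR
  have hdvd := hDR 1 f (ne_zero_of_natDegree_gt hf)
    (Set.finite_empty.subset fun k hk => hk (hu k).dvd)
  rw [Polynomial.map_one] at hdvd
  have hdeg := natDegree_eq_zero_of_isUnit (isUnit_of_dvd_one hdvd)
  rw [natDegree_map_eq_of_injective (IsFractionRing.injective D (FractionRing D))] at hdeg
  omega

end

theorem not_DRing_iff_exists_unit_valued_poly (D : Type*) [CommRing D] [IsDomain D]
    (hD : ¬ IsField D) :
    ¬ IsDRing D ↔ ∃ f : D[X], 1 ≤ f.natDegree ∧ ∀ k : D, IsUnit (f.eval k) := by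
  refine ⟨fun hnot => ?_, fun ⟨f, hf, hu⟩ => not_isDRing_of_isUnit_eval hf hu⟩
  unfold IsDRing at hnot
  push Not at hnot
  obtain ⟨f, g, hg, hfin, hgf⟩ := hnot
  obtain ⟨P, hP, e, he, hPe⟩ := exists_eval_dvd_const_of_not_dvd_map hg hfin hgf
  exact exists_isUnit_eval_of_eval_dvd_const hD hP he hPe
end

section
/- Let D be an integral domain that is not a field. If the Jacobson radical of D is nonzero, then D is not a D-ring. -/
/-!
For a nonzero `a` in the Jacobson radical, `1 + a k` is a unit for every `k`, so `g = aX + 1`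
divides `f = 1` at every point of `D`; but a polynomial of degree one does not divide `1` over
the fraction field.
-/

open Polynomial

theorem IsDRing.isUnit_map_of_forall_isUnit_eval {D : Type*} [CommRing D] [IsDomain D]
    (hD : IsDRing D) {g : D[X]} (hg : g ≠ 0) (hunit : ∀ k, IsUnit (g.eval k)) :
    IsUnit (g.map (algebraMap D (FractionRing D))) := by
  have hfin : {k : D | ¬ g.eval k ∣ (1 : D[X]).eval k}.Finite := by
    convert Set.finite_empty
    ext k
    simp [(hunit k).dvd]
  exact isUnit_of_dvd_one (by simpa using hD 1 g hg hfin)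

theorem isUnit_eval_C_mul_X_add_one_of_mem_jacobson_bot {R : Type*} [CommRing R] {a : R}
    (ha : a ∈ (⊥ : Ideal R).jacobson) (k : R) : IsUnit ((C a * X + 1).eval k) := by
  simpa using Ideal.mem_jacobson_bot.mp ha k

theorem not_DRing_of_jacobson_ne_bot_general (D : Type*) [CommRing D] [IsDomain D]
    (hJ : (⊥ : Ideal D).jacobson ≠ ⊥) : ¬ IsDRing D := by
  intro hDR
  obtain ⟨a, haJ, ha0⟩ := (Submodule.ne_bot_iff _).mp hJ
  have hdeg : (C a * X + 1 : D[X]).natDegree = 1 := by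
    simpa using natDegree_linear (b := 1) ha0
  have hunit := hDR.isUnit_map_of_forall_isUnit_eval (ne_zero_of_natDegree_gt (n := 0) (by omega))
    (isUnit_eval_C_mul_X_add_one_of_mem_jacobson_bot haJ)
  have hdeg0 := natDegree_eq_zero_of_isUnit hunit
  rw [natDegree_map_eq_of_injective (IsFractionRing.injective D _)] at hdeg0
  omega

theorem not_DRing_of_jacobson_ne_bot (D : Type*) [CommRing D] [IsDomain D]
    (hD : ¬ IsField D) (hJ : (⊥ : Ideal D).jacobson ≠ ⊥) : ¬ IsDRing D :=
  not_DRing_of_jacobson_ne_bot_general D hJ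
end

section
/- Let D be a unique factorization domain. If D is a D-ring, then D satisfies the infinite primes property (IPP). -/
/-!
Euclid's argument. Suppose only the primes of a finite set `S` divide nonzero values of `g`,
pick `a` with `c = g a ≠ 0` and put `N = ∏ S`. Since `c N t ∣ g (c N t + a) - c`, every value
`g (c N t + a)` has the form `c u` with `u ≡ 1 mod N`; a prime factor of `u` would divide `N`
and hence `1`, so `u` is a unit whenever the value is nonzero. Thus all nonzero values of the
nonconstant polynomial `g (c N X + a)` divide the constant `c`, which the D-ring property forbids.
-/

open Polynomial

namespace IsDRing

variable {D : Type*} [CommRing D] [IsDomain D]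

theorem infinite (h : IsDRing D) : Infinite D := by
  rw [← not_finite_iff_infinite]
  intro hfin
  have hX := h 1 X X_ne_zero (Set.toFinite _)
  rw [Polynomial.map_one, Polynomial.map_X] at hX
  exact not_isUnit_X (isUnit_of_dvd_one hX)

theorem natDegree_eq_zero_of_forall_eval_dvd (h : IsDRing D) {G : D[X]} {c : D} (hc : c ≠ 0)
    (hG : ∀ t, G.eval t ≠ 0 → G.eval t ∣ c) : G.natDegree = 0 := by
  rcases eq_or_ne G 0 with rfl | hG0
  · exact natDegree_zero
  have hfin : {k : D | ¬ G.eval k ∣ (C c).eval k}.Finite :=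
    (finite_setOfPred_isRoot hG0).subset fun k hk ↦ by
      by_contra hk0
      exact hk (by simpa using hG k hk0)
  have hinj := IsFractionRing.injective D (FractionRing D)
  have hdvd := natDegree_le_of_dvd (h (C c) G hG0 hfin)
    (by simpa [Polynomial.map_C] using (map_ne_zero_iff _ hinj).mpr hc)
  rwa [natDegree_map_eq_of_injective hinj, Polynomial.map_C, natDegree_C,
    Nat.le_zero] at hdvd

end IsDRing

theorem isUnit_of_dvd_sub_one_of_forall_prime_dvd {D : Type*} [CommRing D] [IsDomain D]
    [UniqueFactorizationMonoid D] {u N : D} (hu : u ≠ 0) (hN : N ∣ u - 1)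
    (hprime : ∀ p, Prime p → p ∣ u → p ∣ N) : IsUnit u := by
  by_contra hu1
  obtain ⟨q, hq, hqu⟩ := WfDvdMonoid.exists_irreducible_factor hu1 hu
  have hq := UniqueFactorizationMonoid.irreducible_iff_prime.mp hq
  have hq1 : q ∣ 1 := by
    simpa using dvd_sub hqu ((hprime q hq hqu).trans hN)
  exact hq.not_isUnit (isUnit_of_dvd_one hq1)

theorem eval_mul_add_dvd_eval_of_forall_prime_dvd {D : Type*} [CommRing D] [IsDomain D]
    [UniqueFactorizationMonoid D] {g : D[X]} {N : D}
    (hN : ∀ p, Prime p → (∃ k, g.eval k ≠ 0 ∧ p ∣ g.eval k) → p ∣ N) (a t : D)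
    (ht : g.eval (g.eval a * N * t + a) ≠ 0) :
    g.eval (g.eval a * N * t + a) ∣ g.eval a := by
  set c := g.eval a
  obtain ⟨s, hs⟩ := sub_dvd_eval_sub (c * N * t + a) a g
  have hvalue : g.eval (c * N * t + a) = c * (1 + N * (t * s)) := by
    linear_combination hs
  rw [hvalue] at ht ⊢
  refine (IsUnit.mul_right_dvd ?_).mpr dvd_rfl
  refine isUnit_of_dvd_sub_one_of_forall_prime_dvd (right_ne_zero_of_mul ht) ⟨t * s, by ring⟩
    fun p hp hpu ↦ hN p hp ⟨_, hvalue ▸ ht, hvalue ▸ dvd_mul_of_dvd_right hpu c⟩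

theorem DRing_implies_IPP (D : Type*) [CommRing D] [IsDomain D]
    [UniqueFactorizationMonoid D] (h : IsDRing D) : IPP D := by
  intro g hdeg
  by_contra hfin
  rw [Set.not_infinite] at hfin
  have := h.infinite
  obtain ⟨a, ha⟩ : ∃ a, g.eval a ≠ 0 := by
    by_contra! hzero
    exact absurd hdeg (by simp [zero_of_eval_zero g hzero])
  set N := ∏ p ∈ hfin.toFinset, p
  have hN0 : N ≠ 0 := Finset.prod_ne_zero_iff.mpr fun p hp ↦ (hfin.mem_toFinset.mp hp).1.ne_zero
  have hN : ∀ p, Prime p → (∃ k, g.eval k ≠ 0 ∧ p ∣ g.eval k) → p ∣ N := fun p hp hpk ↦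
    Finset.dvd_prod_of_mem id (hfin.mem_toFinset.mpr ⟨hp, hpk⟩)
  have hG := h.natDegree_eq_zero_of_forall_eval_dvd (G := g.comp (C (g.eval a * N) * X + C a)) ha
    fun t ↦ by simpa using eval_mul_add_dvd_eval_of_forall_prime_dvd hN a t
  rw [natDegree_comp, natDegree_linear (mul_ne_zero ha hN0)] at hG
  omega
end

section
/- Let D be an integral domain. Then D is a D-ring if and only if D satisfies the degree polynomial property (DPP). -/
open Polynomial

/-!
For a D-ring, divisibility at every non-root of `g` can fail only at the finitely many roots,
so `g ∣ f` over the fraction field and `deg g ≤ deg f`. Conversely, DPP tolerates a finite set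
`B` of exceptions: multiply `f` and `g` by `∏_{b ∈ B} (X - b)`. Pseudo-dividing
`d f = q g + r` with `d ≠ 0` and `deg r < deg g`, the remainder `r` is divisible by `g`
wherever `f` is, so DPP forces `r = 0`, i.e. `g ∣ f` over the fraction field.
-/

theorem map_dvd_map_of_C_mul_eq_mul {R K : Type*} [CommRing R] [Field K] {φ : R →+* K}
    (hφ : Function.Injective φ) {d : R} (hd : d ≠ 0) {f g q : R[X]} (h : C d * f = q * g) :
    g.map φ ∣ f.map φ := by
  have hunit : IsUnit (C (φ d)) := isUnit_C.mpr ((map_ne_zero_iff φ hφ).mpr hd).isUnit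
  refine hunit.dvd_mul_left.mp ⟨q.map φ, ?_⟩
  rw [← map_C, ← Polynomial.map_mul, h, Polynomial.map_mul, mul_comm]

section

variable {D : Type*} [CommRing D] [IsDomain D]

lemma finite_setOf_not_dvd_eval {f g : D[X]} (hg : g ≠ 0)
    (hdvd : ∀ k : D, g.eval k ≠ 0 → g.eval k ∣ f.eval k) :
    {k : D | ¬ g.eval k ∣ f.eval k}.Finite :=
  (finite_setOfPred_isRoot hg).subset fun _ hk ↦ not_not.mp (mt (hdvd _) hk)

theorem IsDRing.dpp (hD : IsDRing D) : DPP D := by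
  intro f g hdvd
  by_cases hg : g = 0
  · simp [hg]
  refine or_iff_not_imp_left.mpr fun hf ↦ ?_
  have hinj := IsFractionRing.injective D (FractionRing D)
  have hmap := hD f g hg (finite_setOf_not_dvd_eval hg hdvd)
  simpa only [natDegree_map_eq_of_injective hinj] using
    natDegree_le_of_dvd hmap ((Polynomial.map_ne_zero_iff hinj).mpr hf)

theorem DPP.eq_zero_or_natDegree_le_of_finite (hD : DPP D) {f g : D[X]} (hg : g ≠ 0)
    (hfin : {k : D | ¬ g.eval k ∣ f.eval k}.Finite) : f = 0 ∨ g.natDegree ≤ f.natDegree := by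
  set h := Lagrange.nodal hfin.toFinset id
  have hh : h ≠ 0 := Lagrange.nodal_ne_zero
  have hdvd : ∀ k : D, (g * h).eval k ≠ 0 → (g * h).eval k ∣ (f * h).eval k := by
    intro k hk
    simp only [eval_mul] at hk ⊢
    have hkB : k ∉ hfin.toFinset := fun hkB ↦ right_ne_zero_of_mul hk
      (Lagrange.eval_nodal_at_node (v := id) hkB)
    exact mul_dvd_mul_right (not_not.mp (mt hfin.mem_toFinset.mpr hkB)) _
  rcases hD _ _ hdvd with hfh | hle
  · exact .inl ((mul_eq_zero.mp hfh).resolve_right hh)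
  · by_cases hf : f = 0
    · exact .inl hf
    · rw [natDegree_mul hg hh, natDegree_mul hf hh] at hle
      exact .inr (by omega)

theorem exists_C_mul_eq_mul_add_of_ne_zero {g : D[X]} (hg : g ≠ 0) (f : D[X]) :
    ∃ d : D, d ≠ 0 ∧ ∃ q r : D[X], C d * f = q * g + r ∧ r.degree < g.degree := by
  set φ := algebraMap D (FractionRing D)
  have hinj : Function.Injective φ := IsFractionRing.injective D (FractionRing D)
  obtain ⟨d, hdD, hd⟩ := IsLocalization.integerNormalization_spec
    (nonZeroDivisors D) (f.map φ / g.map φ)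
  set q := IsLocalization.integerNormalization (nonZeroDivisors D) (f.map φ / g.map φ)
  have hd0 : d ≠ 0 := nonZeroDivisors.ne_zero hdD
  have hφd : φ d ≠ 0 := (map_ne_zero_iff φ hinj).mpr hd0
  refine ⟨d, hd0, q, C d * f - q * g, by ring, ?_⟩
  have hq : q.map φ = C (φ d) * (f.map φ / g.map φ) := by
    rw [hd, ← smul_eq_C_mul, algebraMap_smul]
  have hmap : (C d * f - q * g).map φ = C (φ d) * (f.map φ % g.map φ) := by
    rw [Polynomial.map_sub, Polynomial.map_mul, Polynomial.map_mul, map_C, hq]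
    linear_combination (-C (φ d)) * EuclideanDomain.div_add_mod (f.map φ) (g.map φ)
  rw [← degree_map_eq_of_injective hinj, hmap, degree_C_mul hφd,
    ← degree_map_eq_of_injective hinj g]
  exact EuclideanDomain.mod_lt _ ((Polynomial.map_ne_zero_iff hinj).mpr hg)

theorem DPP.isDRing (hD : DPP D) : IsDRing D := by
  intro f g hg hfin
  obtain ⟨d, hd, q, r, hqr, hdeg⟩ := exists_C_mul_eq_mul_add_of_ne_zero hg f
  have hr : r = C d * f - q * g := by rw [hqr]; ring
  have hrfin : {k : D | ¬ g.eval k ∣ r.eval k}.Finite := by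
    refine hfin.subset fun k hk hfk ↦ hk ?_
    simp only [hr, eval_sub, eval_mul, eval_C]
    exact dvd_sub (hfk.mul_left _) (dvd_mul_left _ _)
  have hr0 : r = 0 := by
    by_contra hr0
    have hlt := natDegree_lt_natDegree hr0 hdeg
    have hle := (hD.eq_zero_or_natDegree_le_of_finite hg hrfin).resolve_left hr0
    omega
  rw [hr0, add_zero] at hqr
  exact map_dvd_map_of_C_mul_eq_mul (IsFractionRing.injective D (FractionRing D)) hd hqr

end

theorem DRing_iff_DPP (D : Type*) [CommRing D] [IsDomain D] :
    IsDRing D ↔ DPP D :=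
  ⟨IsDRing.dpp, DPP.isDRing⟩
end

section
/- (Kaplansky) Let D be an infinite integral domain with only finitely many units. Then D has infinitely many maximal ideals. -/
open Polynomial

/-!
If `D` had only finitely many maximal ideals, then either `D` is a field, whose units are all
nonzero elements, or every maximal ideal is nonzero, so that their product is a nonzero ideal
inside the Jacobson radical. A nonzero `a` in the Jacobson radical makes `d ↦ 1 + a * d` an
injection of `D` into `Dˣ`. Either way an infinite `D` has infinitely many units.
-/

theorem infinite_units_of_infinite (G₀ : Type*) [GroupWithZero G₀] [Infinite G₀] :
    Infinite G₀ˣ :=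
  have : Infinite {a : G₀ // a ≠ 0} := (Set.finite_singleton 0).infinite_compl.to_subtype
  Infinite.of_injective _ unitsEquivNeZero.symm.injective

theorem infinite_units_of_jacobson_bot_ne_bot {R : Type*} [CommRing R] [IsDomain R] [Infinite R]
    (h : (⊥ : Ideal R).jacobson ≠ ⊥) : Infinite Rˣ := by
  obtain ⟨a, ha, ha0⟩ := Submodule.exists_mem_ne_zero_of_ne_bot h
  let f : R → Rˣ := fun d ↦ (Ideal.mem_jacobson_bot.mp ha d).unit
  refine Infinite.of_injective f fun d e hde ↦ mul_left_cancel₀ ha0 ?_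
  simpa [f] using congrArg Units.val hde

theorem jacobson_bot_ne_bot_of_finite_maximal {R : Type*} [CommRing R] [IsDomain R]
    (hR : ¬IsField R) (hfin : {I : Ideal R | I.IsMaximal}.Finite) :
    (⊥ : Ideal R).jacobson ≠ ⊥ := by
  have hprod : ∏ I ∈ hfin.toFinset, I ≠ ⊥ := by
    rw [← Ideal.zero_eq_bot, Finset.prod_ne_zero_iff]
    intro I hI
    exact Ring.ne_bot_of_isMaximal_of_not_isField (hfin.mem_toFinset.mp hI) hR
  have hle : ∏ I ∈ hfin.toFinset, I ≤ (⊥ : Ideal R).jacobson :=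
    Ideal.prod_le_inf.trans <| le_sInf fun J hJ ↦ Finset.inf_le (hfin.mem_toFinset.mpr hJ.2)
  exact fun hbot ↦ hprod (eq_bot_iff.mpr (hbot ▸ hle))

theorem infinite_maximal_ideals_of_finite_units (D : Type*) [CommRing D] [IsDomain D]
    [Infinite D] (hu : Finite Dˣ) :
    {I : Ideal D | I.IsMaximal}.Infinite := by
  intro hfin
  have : Infinite Dˣ := by
    by_cases hD : IsField D
    · let := hD.toField
      exact infinite_units_of_infinite D
    · exact infinite_units_of_jacobson_bot_ne_bot (jacobson_bot_ne_bot_of_finite_maximal hD hfin)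
  exact not_finite Dˣ
end
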